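/- arXiv:2005.04801 — 7 statements merged into one kernel-verified Lean document; each statement's English description precedes it below -/
import Mathlib

section
/- For every integer n ≥ 2, the Apéry numbers satisfy the recurrence n^3·A(n) − (34n^3 − 51n^2 + 27n − 5)·A(n−1) + (n−1)^3·A(n−2) = 0. -/
def apery (n : ℕ) : ℕ := ∑ k ∈ Finset.range (n + 1), (n.choose k)^2 * ((n + k).choose k)^2

/-!
Creative telescoping, with the certificate from van der Poorten's "A proof that Euler missed".
For `a n k = C(n,k)² C(n+k,k)²` and `B n k = 4 (2n+1) (k(2k+1) - (2n+1)²) a n k`,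
`(n+1)³ a (n+1) k - (2n+1)(17n²+17n+5) a n k + n³ a (n-1) k = B n k - B n (k-1)`:
once every binomial coefficient is written as a rational multiple of `C(n,k-1)` or
`C(n+k-1,k-1)`, this is an identity of rational functions of `n` and `k`. Summing over
`k ≤ n + 1` telescopes to `B n (n+1) = 0`.
-/

open Finset

theorem Nat.cast_choose_succ_right_mul {R : Type*} [Ring R] (n k : ℕ) :
    (n.choose (k + 1) : R) * (k + 1) = n.choose k * ((n : R) - k) := by
  rcases le_or_gt k n with h | h
  · have := congrArg (Nat.cast : ℕ → R) (Nat.choose_succ_right_eq n k)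
    push_cast [Nat.cast_sub h] at this
    exact this
  · simp [Nat.choose_eq_zero_of_lt h, Nat.choose_eq_zero_of_lt (Nat.lt_succ_of_lt h)]

theorem Nat.cast_choose_mul_succ {R : Type*} [Ring R] (n k : ℕ) :
    (n.choose k : R) * (n + 1) = (n + 1).choose k * ((n : R) + 1 - k) := by
  rcases le_or_gt k (n + 1) with h | h
  · have := congrArg (Nat.cast : ℕ → R) (Nat.choose_mul_succ_eq n k)
    push_cast [Nat.cast_sub h] at this
    exact this
  · simp [Nat.choose_eq_zero_of_lt h, Nat.choose_eq_zero_of_lt (Nat.lt_of_succ_lt h)]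

theorem Nat.cast_choose_succ_right_eq_div {K : Type*} [Field K] [CharZero K] (n k : ℕ) :
    (n.choose (k + 1) : K) = n.choose k * ((n : K) - k) / (k + 1) :=
  eq_div_of_mul_eq (Nat.cast_add_one_ne_zero k) (Nat.cast_choose_succ_right_mul n k)

theorem Nat.cast_succ_choose_succ_eq_div {K : Type*} [Field K] [CharZero K] (n k : ℕ) :
    ((n + 1).choose (k + 1) : K) = n.choose k * ((n : K) + 1) / (k + 1) :=
  eq_div_of_mul_eq (Nat.cast_add_one_ne_zero k) <| by
    exact_mod_cast (Nat.add_one_mul_choose_eq n k).symm.trans (mul_comm _ _)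

def aperySummand (n k : ℕ) : ℚ := (n.choose k : ℚ) ^ 2 * ((n + k).choose k : ℚ) ^ 2

def aperyCertificate (n k : ℕ) : ℚ :=
  4 * (2 * n + 1) * (k * (2 * k + 1) - (2 * n + 1) ^ 2) * aperySummand n k

@[simp]
theorem aperySummand_zero (n : ℕ) : aperySummand n 0 = 1 := by
  simp [aperySummand]

theorem aperySummand_eq_zero_of_lt {n k : ℕ} (h : n < k) : aperySummand n k = 0 := by
  simp [aperySummand, Nat.choose_eq_zero_of_lt h]

theorem aperyCertificate_eq_zero_of_lt {n k : ℕ} (h : n < k) : aperyCertificate n k = 0 := by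
  simp [aperyCertificate, aperySummand_eq_zero_of_lt h]

theorem apery_cast_eq_sum {n N : ℕ} (h : n ≤ N) :
    (apery n : ℚ) = ∑ k ∈ range (N + 1), aperySummand n k := by
  simp only [apery, aperySummand]
  push_cast
  refine sum_subset (range_subset_range.mpr (by omega)) fun k hkN hkn => ?_
  simp only [mem_range, not_lt] at hkN hkn
  simp [Nat.choose_eq_zero_of_lt (by omega : n < k)]

theorem aperySummand_recurrence (m k : ℕ) :
    ((m : ℚ) + 2) ^ 3 * aperySummand (m + 2) (k + 1)
      - (2 * (m : ℚ) + 3) * (17 * (m : ℚ) ^ 2 + 51 * m + 39) * aperySummand (m + 1) (k + 1)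
      + ((m : ℚ) + 1) ^ 3 * aperySummand m (k + 1)
      = aperyCertificate (m + 1) (k + 1) - aperyCertificate (m + 1) k := by
  have shift_down : (m.choose (k + 1) : ℚ)
      = ((m + 1).choose k : ℚ) * (m + 1 - k) * (m - k) / ((k + 1) * (m + 1)) := by
    have h₁ := Nat.cast_choose_mul_succ (R := ℚ) m (k + 1)
    have h₂ := Nat.cast_choose_succ_right_mul (R := ℚ) (m + 1) k
    push_cast at h₁ h₂
    rw [eq_div_iff (by positivity)]
    linear_combination (k + 1) * h₁ + (m - k) * h₂
  have shift_up : ((m + 2 + k + 1).choose (k + 1) : ℚ)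
      = ((m + 1 + k).choose k : ℚ) * (m + 2 + k) * (m + 3 + k) / ((k + 1) * (m + 2)) := by
    have h₁ := congrArg (Nat.cast : ℕ → ℚ) (Nat.add_one_mul_choose_eq (m + 2 + k) k)
    have h₂ := Nat.cast_choose_mul_succ (R := ℚ) (m + 1 + k) k
    rw [show m + 1 + k + 1 = m + 2 + k by ring] at h₂
    push_cast at h₁ h₂
    rw [eq_div_iff (by positivity)]
    linear_combination -(m + 2) * h₁ - (m + 3 + k) * h₂
  simp only [aperySummand, aperyCertificate]
  rw [show m + 2 + (k + 1) = m + 2 + k + 1 by ring, shift_up, show m + 2 = m + 1 + 1 from rfl,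
    show m + 1 + (k + 1) = m + 1 + k + 1 by ring, show m + (k + 1) = m + 1 + k by ring, shift_down,
    Nat.cast_choose_succ_right_eq_div (m + 1) k, Nat.cast_succ_choose_succ_eq_div (m + 1) k,
    Nat.cast_choose_succ_right_eq_div (m + 1 + k) k, Nat.cast_succ_choose_succ_eq_div (m + 1 + k) k]
  push_cast
  field_simp
  ring

theorem sum_aperySummand_recurrence (m N : ℕ) :
    ((m : ℚ) + 2) ^ 3 * ∑ k ∈ range (N + 1), aperySummand (m + 2) k
      - (2 * (m : ℚ) + 3) * (17 * (m : ℚ) ^ 2 + 51 * m + 39)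
        * ∑ k ∈ range (N + 1), aperySummand (m + 1) k
      + ((m : ℚ) + 1) ^ 3 * ∑ k ∈ range (N + 1), aperySummand m k
      = aperyCertificate (m + 1) N := by
  induction N with
  | zero =>
    simp only [zero_add, sum_range_one, aperySummand_zero, aperyCertificate]
    push_cast
    ring
  | succ N ih =>
    rw [sum_range_succ _ (N + 1), sum_range_succ _ (N + 1), sum_range_succ _ (N + 1)]
    linear_combination ih + aperySummand_recurrence m N

theorem apery_recurrence (n : ℕ) (hn : 2 ≤ n) :
    (n : ℤ)^3 * apery n - (34 * (n : ℤ)^3 - 51 * (n : ℤ)^2 + 27 * (n : ℤ) - 5) * apery (n - 1)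
      + ((n : ℤ) - 1)^3 * apery (n - 2) = 0 := by
  obtain ⟨m, rfl⟩ : ∃ m, n = m + 2 := ⟨n - 2, by omega⟩
  rw [show m + 2 - 1 = m + 1 by omega, Nat.add_sub_cancel]
  qify
  rw [apery_cast_eq_sum (le_refl (m + 2)), apery_cast_eq_sum (by omega : m + 1 ≤ m + 2),
    apery_cast_eq_sum (by omega : m ≤ m + 2)]
  have hsum := sum_aperySummand_recurrence m (m + 2)
  rw [aperyCertificate_eq_zero_of_lt (by omega)] at hsum
  linear_combination hsum
end

section
/- For every prime p, every d ∈ {0, 1, ..., p−1}, and every natural number n, the Apéry numbers satisfy the Lucas congruence A(d + p·n) ≡ A(d)·A(n) (mod p). -/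
/-!
Write the summation index of `A(d + p n)` in base `p` as `j + p m` with `j < p`. By Lucas's
theorem, `C(d + p n, j + p m) ≡ C(d, j) C(n, m)` and
`C(d + p n + j + p m, j + p m) ≡ C(d + j, j) C(n + m, m)` modulo `p`; the second congruence
survives a carry `d + j ≥ p` because both sides then vanish, as `C(d + j - p, j) = 0`. Hence
each summand of `A(d + p n)` is congruent to the product of the `j`-th summand of `A(d)` and
the `m`-th summand of `A(n)`, and summing over `j < p`, `m ≤ n` gives `A(d) A(n)`.
-/

open Finset

lemma sum_range_mul_eq_sum_sum {M : Type*} [AddCommMonoid M] (f : ℕ → M) (p : ℕ) :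
    ∀ n : ℕ, ∑ k ∈ range (p * n), f k = ∑ m ∈ range n, ∑ j ∈ range p, f (j + p * m)
  | 0 => by simp
  | n + 1 => by
    rw [Nat.mul_succ, sum_range_add, sum_range_mul_eq_sum_sum f p n, sum_range_succ]
    simp only [Nat.add_comm (p * n)]

section Lucas

variable {p : ℕ} [Fact p.Prime]

lemma choose_add_mul_add_mul_cast {a c : ℕ} (ha : a < p) (hc : c < p) (b e : ℕ) :
    (((a + p * b).choose (c + p * e) : ℕ) : ZMod p) = a.choose c * b.choose e := by
  have hp : 0 < p := (Fact.out : p.Prime).pos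
  have h := Choose.choose_modEq_choose_mod_mul_choose_div_nat (p := p) (n := a + p * b)
    (k := c + p * e)
  rw [Nat.add_mul_mod_self_left, Nat.add_mul_mod_self_left, Nat.add_mul_div_left _ _ hp,
    Nat.add_mul_div_left _ _ hp, Nat.mod_eq_of_lt ha, Nat.mod_eq_of_lt hc,
    Nat.div_eq_of_lt ha, Nat.div_eq_of_lt hc, Nat.zero_add, Nat.zero_add] at h
  exact_mod_cast (ZMod.natCast_eq_natCast_iff _ _ _).mpr h

lemma choose_add_mul_add_mul_cast_eq_zero {a c : ℕ} (hac : a < c) (hc : c < p) (b e : ℕ) :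
    (((a + p * b).choose (c + p * e) : ℕ) : ZMod p) = 0 := by
  rw [choose_add_mul_add_mul_cast (hac.trans hc) hc, Nat.choose_eq_zero_of_lt hac,
    Nat.cast_zero, zero_mul]

lemma choose_add_add_mul_cast {d j : ℕ} (hd : d < p) (hj : j < p) (n m : ℕ) :
    (((d + p * n + (j + p * m)).choose (j + p * m) : ℕ) : ZMod p)
      = (d + j).choose j * (n + m).choose m := by
  by_cases hdj : d + j < p
  · rw [show d + p * n + (j + p * m) = d + j + p * (n + m) by ring,
      choose_add_mul_add_mul_cast hdj hj]
  · have hcarry : d + j - p < j := by omega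
    have hsplit : (d + j).choose j = (d + j - p + p * 1).choose (j + p * 0) := by
      congr 1; omega
    rw [show d + p * n + (j + p * m) = d + j - p + p * (n + m + 1) by
        rw [Nat.mul_add, Nat.mul_add, Nat.mul_one]; omega,
      choose_add_mul_add_mul_cast_eq_zero hcarry hj, hsplit,
      choose_add_mul_add_mul_cast_eq_zero hcarry hj, zero_mul]

end Lucas

def aperyTerm (n k : ℕ) : ℕ := n.choose k ^ 2 * (n + k).choose k ^ 2

lemma apery_eq_sum_range_aperyTerm {n M : ℕ} (hM : n < M) :
    apery n = ∑ k ∈ range M, aperyTerm n k := by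
  refine sum_subset (range_subset_range.mpr hM) fun k _ hk => ?_
  simp [Nat.choose_eq_zero_of_lt (by simpa using hk : n < k)]

lemma aperyTerm_add_mul_cast {p : ℕ} [Fact p.Prime] {d j : ℕ} (hd : d < p) (hj : j < p)
    (n m : ℕ) :
    (aperyTerm (d + p * n) (j + p * m) : ZMod p) = aperyTerm d j * aperyTerm n m := by
  simp only [aperyTerm, Nat.cast_mul, Nat.cast_pow]
  rw [choose_add_mul_add_mul_cast hd hj, choose_add_add_mul_cast hd hj]
  ring

theorem apery_lucas_mod_p (p : ℕ) (hp : p.Prime) (d : ℕ) (hd : d ≤ p - 1) (n : ℕ) :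
    apery (d + p * n) ≡ apery d * apery n [MOD p] := by
  have : Fact p.Prime := ⟨hp⟩
  have hdp : d < p := by have := hp.pos; omega
  rw [← ZMod.natCast_eq_natCast_iff,
    apery_eq_sum_range_aperyTerm (M := p * (n + 1)) (by nlinarith),
    apery_eq_sum_range_aperyTerm hdp, apery_eq_sum_range_aperyTerm n.lt_succ_self,
    sum_range_mul_eq_sum_sum]
  push_cast
  rw [sum_mul_sum, sum_comm]
  exact sum_congr rfl fun j hj => sum_congr rfl fun m _ =>
    aperyTerm_add_mul_cast hdp (mem_range.mp hj) n m
end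

section
/- For every natural number n, A(n) ≡ 5^n (mod 8), where A denotes the Apéry numbers. -/
/-!
Put `x k = C(n,k) C(n+k,k)`, so that `A(n) = ∑ x k ^ 2` and the central Delannoy number is
`D(n) = ∑ x k`. Since `x 0 = 1` and `x k = C(n+k,2k) C(2k,k)` is even for `k ≥ 1`, squaring
`D(n) - 1` modulo 8 kills the cross terms: `A(n) ≡ 1 + (D(n) - 1)^2 [MOD 8]`. The identity
`D(n) = ∑ C(n,a)^2 2^(n-a)` gives `D(n) ≡ 1 + 2n [MOD 4]`, hence `A(n) ≡ 1 + 4n ≡ 5^n [MOD 8]`.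
-/

open Finset

theorem Nat.two_dvd_choose_mul_add_choose {n k : ℕ} (hk : 0 < k) :
    2 ∣ n.choose k * (n + k).choose k := by
  rcases le_or_gt k n with hkn | hnk
  · have h := Nat.choose_mul (n := n + k) (k := 2 * k) (s := k) (by omega)
    rw [show n + k - k = n by omega, show 2 * k - k = k by omega] at h
    rw [mul_comm, ← h, ← Nat.centralBinom_eq_two_mul_choose]
    exact dvd_mul_of_dvd_right (Nat.two_dvd_centralBinom_of_one_le hk) _
  · simp [Nat.choose_eq_zero_of_lt hnk]

theorem Nat.add_choose_eq_sum_choose_mul_choose (n k : ℕ) :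
    (n + k).choose k = ∑ a ∈ range (n + 1), n.choose a * k.choose a := by
  rw [← Nat.choose_symm_add, Nat.add_choose_eq, Nat.sum_antidiagonal_eq_sum_range_succ_mk,
    ← sum_range_reflect]
  refine sum_congr rfl fun a ha => ?_
  have ha : a ≤ n := Nat.lt_succ_iff.1 (mem_range.1 ha)
  dsimp only
  rw [Nat.succ_sub_one, Nat.sub_sub_self ha, Nat.choose_symm ha]

theorem Nat.sum_range_choose_mul_choose (n a : ℕ) :
    ∑ k ∈ range (n + 1), n.choose k * k.choose a = n.choose a * 2 ^ (n - a) := by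
  rcases le_or_gt a n with ha | ha
  · rw [← sum_range_add_sum_Ico _ (show a ≤ n + 1 by omega),
      sum_eq_zero fun k hk => by simp [Nat.choose_eq_zero_of_lt (mem_range.1 hk)], zero_add,
      sum_Ico_eq_sum_range, show n + 1 - a = n - a + 1 by omega, ← Nat.sum_range_choose, mul_sum]
    refine sum_congr rfl fun j _ => ?_
    rw [Nat.choose_mul (by omega), Nat.add_sub_cancel_left]
  · rw [Nat.choose_eq_zero_of_lt ha, zero_mul]
    exact sum_eq_zero fun k hk => by
      simp [Nat.choose_eq_zero_of_lt ((Nat.lt_succ_iff.1 (mem_range.1 hk)).trans_lt ha)]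

theorem Nat.sq_modEq_self_two (n : ℕ) : n ^ 2 ≡ n [MOD 2] := by
  rcases Nat.even_or_odd n with h | h <;>
    simp [Nat.ModEq, Nat.pow_mod, Nat.even_iff.1, Nat.odd_iff.1, h]

theorem sq_sum_modEq_sum_sq_of_two_dvd {ι : Type*} (s : Finset ι) (f : ι → ℕ)
    (hf : ∀ i ∈ s, 2 ∣ f i) : (∑ i ∈ s, f i) ^ 2 ≡ ∑ i ∈ s, f i ^ 2 [MOD 8] := by
  classical
  induction s using Finset.induction_on with
  | empty => rfl
  | insert a s ha ih =>
    rw [sum_insert ha, sum_insert ha]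
    obtain ⟨u, hu⟩ := hf a (mem_insert_self a s)
    obtain ⟨v, hv⟩ := dvd_sum fun i hi => hf i (mem_insert_of_mem hi)
    have hcross : (f a + ∑ i ∈ s, f i) ^ 2 = f a ^ 2 + (∑ i ∈ s, f i) ^ 2 + 8 * (u * v) := by
      rw [hu, hv]; ring
    have ih := ih fun i hi => hf i (mem_insert_of_mem hi)
    rw [hcross]
    unfold Nat.ModEq at *
    omega

theorem Nat.ModEq.sq_of_two_mul {m a b : ℕ} (h : a ≡ b [MOD 2 * m]) :
    a ^ 2 ≡ b ^ 2 [MOD 4 * m] := by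
  rw [Nat.modEq_iff_dvd] at *
  obtain ⟨t, ht⟩ := h
  push_cast at *
  exact ⟨t * (a + m * t), by linear_combination (b + a + 2 * m * t) * ht⟩

def centralDelannoy (n : ℕ) : ℕ := ∑ k ∈ range (n + 1), n.choose k * (n + k).choose k

theorem centralDelannoy_eq_sum_choose_sq_mul_two_pow (n : ℕ) :
    centralDelannoy n = ∑ a ∈ range (n + 1), n.choose a ^ 2 * 2 ^ (n - a) := by
  simp only [centralDelannoy, Nat.add_choose_eq_sum_choose_mul_choose, mul_sum]
  rw [sum_comm]
  refine sum_congr rfl fun a _ => ?_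
  calc ∑ k ∈ range (n + 1), n.choose k * (n.choose a * k.choose a)
      = n.choose a * ∑ k ∈ range (n + 1), n.choose k * k.choose a := by
        rw [mul_sum]; exact sum_congr rfl fun k _ => by ring
    _ = n.choose a ^ 2 * 2 ^ (n - a) := by rw [Nat.sum_range_choose_mul_choose]; ring

theorem centralDelannoy_modEq_four (n : ℕ) : centralDelannoy n ≡ 2 * n + 1 [MOD 4] := by
  rw [centralDelannoy_eq_sum_choose_sq_mul_two_pow]
  rcases n with _ | m
  · rfl
  have hfour : 4 ∣ ∑ a ∈ range m, (m + 1).choose a ^ 2 * 2 ^ (m + 1 - a) :=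
    dvd_sum fun a ha => dvd_mul_of_dvd_right
      (pow_dvd_pow 2 (show 2 ≤ m + 1 - a by have := mem_range.1 ha; omega)) _
  rw [sum_range_succ, sum_range_succ, Nat.choose_succ_self_right, Nat.choose_self,
    show m + 1 - m = 1 by omega, Nat.sub_self]
  obtain ⟨t, ht⟩ := hfour
  have hsq := Nat.sq_modEq_self_two (m + 1)
  rw [ht]
  unfold Nat.ModEq at *
  omega

theorem apery_modEq_eight (n : ℕ) : apery n ≡ 4 * n + 1 [MOD 8] := by
  set x : ℕ → ℕ := fun k => n.choose k * (n + k).choose k with hx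
  set S := ∑ k ∈ range n, x (k + 1)
  have hA : apery n = ∑ k ∈ range n, x (k + 1) ^ 2 + 1 := by
    simp [apery, sum_range_succ', hx, mul_pow]
  have hD : centralDelannoy n = S + 1 := by
    simp [centralDelannoy, sum_range_succ', hx, S]
  have hS : S ≡ 2 * n [MOD 2 * 2] :=
    Nat.ModEq.add_right_cancel' 1 (hD ▸ centralDelannoy_modEq_four n)
  have hsq : ∑ k ∈ range n, x (k + 1) ^ 2 ≡ S ^ 2 [MOD 8] :=
    (sq_sum_modEq_sum_sq_of_two_dvd _ _ fun k _ =>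
      Nat.two_dvd_choose_mul_add_choose k.succ_pos).symm
  have hn : (2 * n) ^ 2 ≡ 4 * n [MOD 8] := by
    rw [mul_pow]
    exact (Nat.sq_modEq_self_two n).mul_left' 4
  rw [hA]
  exact ((hsq.trans hS.sq_of_two_mul).trans hn).add_right 1

theorem five_pow_modEq_eight (n : ℕ) : 5 ^ n ≡ 4 * n + 1 [MOD 8] := by
  induction n with
  | zero => rfl
  | succ n ih =>
    unfold Nat.ModEq at *
    rw [pow_succ]
    omega

theorem apery_mod_eight (n : ℕ) : apery n ≡ 5 ^ n [MOD 8] :=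
  (apery_modEq_eight n).trans (five_pow_modEq_eight n).symm
end

section
/- For every prime p ≥ 5 and every natural number n, A(p·n) ≡ A(n) (mod p^3), where A denotes the Apéry numbers. -/
/-!
Split `A(pn) = ∑ₖ C(pn,k)² C(pn+k,k)²` according to `k = tp + j` with `0 ≤ j < p`.

For `j = 0` the Jacobsthal-type congruence `C(ap,bp)² ≡ C(a,b)² (mod p³)` turns the terms into
those of `A(n)`. Writing `(mp)! = p^m m! ∏_{t<m} P_t`, where `P_t = blockProd p t` is the product
of the integers strictly between `tp` and `(t+1)p`, it reduces to `P_t² ≡ P_0² (mod p³)`. Pairing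
`tp + i` with `tp + p - i` gives `P_t² = ∏ᵢ (i(p-i) + p²t(t+1))`, whose first-order term in
`p²t(t+1)` vanishes modulo `p³` because `∑ᵢ 1/i² ≡ 0 (mod p)` for `p ≥ 5`.

For `j ≠ 0`, `C(pn,k) = (pn/k) C(pn-1,k-1)` makes each term `p²` times a cofactor which, by
Lucas' theorem, is `≡ n² C(n-1,t)² C(n+t,t)² / j² (mod p)`; summed over `j` it vanishes for the
same reason.
-/

open Finset Nat

@[to_additive]
theorem Finset.prod_range_eq_prod_blocks {M : Type*} [CommMonoid M] (f : ℕ → M) (m k : ℕ) :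
    ∏ i ∈ range (m * k), f i = ∏ t ∈ range m, ∏ j ∈ range k, f (t * k + j) := by
  induction m with
  | zero => simp
  | succ m ih => rw [Nat.succ_mul, prod_range_add, ih, prod_range_succ]

theorem Finset.prod_add_of_mul_self_eq_zero {ι R : Type*} [DecidableEq ι] [CommSemiring R]
    {ε : R} (hε : ε * ε = 0) (s : Finset ι) (a : ι → R) :
    ∏ i ∈ s, (a i + ε) = ∏ i ∈ s, a i + ε * ∑ i ∈ s, ∏ j ∈ s.erase i, a j := by
  induction s using Finset.induction_on with
  | empty => simp
  | insert i s hi ih =>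
    have herase : ∀ j ∈ s, ∏ x ∈ (insert i s).erase j, a x = a i * ∏ x ∈ s.erase j, a x :=
      fun j hj => by
        rw [erase_insert_of_ne (by rintro rfl; exact hi hj),
          prod_insert fun h => hi (mem_of_mem_erase h)]
    rw [prod_insert hi, prod_insert hi, sum_insert hi, erase_insert hi, ih, sum_congr rfl herase,
      ← mul_sum]
    calc (a i + ε) * (∏ x ∈ s, a x + ε * ∑ x ∈ s, ∏ j ∈ s.erase x, a j)
        = a i * ∏ x ∈ s, a x + ε * (∏ x ∈ s, a x + a i * ∑ x ∈ s, ∏ j ∈ s.erase x, a j)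
          + ε * ε * ∑ x ∈ s, ∏ j ∈ s.erase x, a j := by ring
      _ = _ := by rw [hε, zero_mul, add_zero]

theorem Finset.sum_prod_erase_eq_prod_mul_sum_inv {ι K : Type*} [DecidableEq ι] [Semifield K]
    (s : Finset ι) {b : ι → K} (hb : ∀ i ∈ s, b i ≠ 0) :
    ∑ i ∈ s, ∏ j ∈ s.erase i, b j = (∏ i ∈ s, b i) * ∑ i ∈ s, (b i)⁻¹ := by
  rw [mul_sum]
  refine sum_congr rfl fun i hi => ?_
  rw [← mul_prod_erase s b hi, mul_comm (b i), mul_assoc, mul_inv_cancel₀ (hb i hi), mul_one]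

namespace ZMod

theorem sq_mul_eq_zero_of_castHom_eq_zero {p : ℕ} [NeZero p] {x : ZMod (p ^ 3)}
    (hx : castHom (dvd_pow_self p three_ne_zero) (ZMod p) x = 0) :
    (p : ZMod (p ^ 3)) ^ 2 * x = 0 := by
  rw [← natCast_zmod_val x, map_natCast, natCast_eq_zero_iff] at hx
  obtain ⟨y, hy⟩ := hx
  rw [← natCast_zmod_val x, hy, Nat.cast_mul, ← mul_assoc, ← pow_succ, ← Nat.cast_pow,
    natCast_self, zero_mul]

theorem natCast_add_one_choose_add_one {m N k : ℕ} (hk : IsUnit ((k + 1 : ℕ) : ZMod m)) :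
    (((N + 1).choose (k + 1) : ℕ) : ZMod m)
      = (N + 1 : ℕ) * N.choose k * ((k + 1 : ℕ) : ZMod m)⁻¹ := by
  rw [← Nat.cast_mul, add_one_mul_choose_eq, Nat.cast_mul, mul_assoc, mul_inv_of_unit _ hk,
    mul_one]

variable {p : ℕ} [Fact p.Prime]

theorem castHom_inv {n : ℕ} (h : p ∣ n) {x : ZMod n} (hx : IsUnit x) :
    castHom h (ZMod p) x⁻¹ = (castHom h (ZMod p) x)⁻¹ := by
  obtain ⟨u, rfl⟩ := hx
  rw [inv_coe_unit, map_units_inv]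

theorem sum_inv_sq_eq_zero (hp5 : 5 ≤ p) : ∑ x : ZMod p, x⁻¹ ^ 2 = 0 :=
  (Equiv.sum_comp (Equiv.inv (ZMod p)) (· ^ 2)).trans
    (FiniteField.sum_pow_lt_card_sub_one _ 2 (by rw [ZMod.card]; omega))

theorem sum_range_inv_sq_eq_zero (hp5 : 5 ≤ p) :
    ∑ j ∈ range (p - 1), ((j + 1 : ℕ) : ZMod p)⁻¹ ^ 2 = 0 := by
  have h : ∑ j ∈ range p, (j : ZMod p)⁻¹ ^ 2 = ∑ x : ZMod p, x⁻¹ ^ 2 :=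
    sum_nbij' (fun j => (j : ZMod p)) val (fun _ _ => mem_univ _)
      (fun x _ => mem_range.2 x.val_lt) (fun j hj => val_cast_of_lt (mem_range.1 hj))
      (fun x _ => natCast_zmod_val x) (fun _ _ => rfl)
  rw [sum_inv_sq_eq_zero hp5, show range p = range (p - 1 + 1) by
    rw [Nat.sub_add_cancel (Fact.out : p.Prime).one_le], sum_range_succ'] at h
  simpa using h

theorem natCast_sub_one_choose {j : ℕ} (hj : j < p) :
    (((p - 1).choose j : ℕ) : ZMod p) = (-1) ^ j := by
  induction j with
  | zero => simp
  | succ j ih =>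
    have hp := (Fact.out : p.Prime)
    have h := congrArg (Nat.cast : ℕ → ZMod p) (choose_succ_succ' (p - 1) j)
    rw [Nat.sub_add_cancel hp.one_le,
      (natCast_eq_zero_iff _ _).2 (hp.dvd_choose_self j.succ_ne_zero hj), Nat.cast_add,
      ih (by omega)] at h
    linear_combination -h

theorem natCast_choose_add_mul {a b c d : ℕ} (ha : a < p) (hc : c < p) :
    (((a + p * b).choose (c + p * d) : ℕ) : ZMod p) = a.choose c * b.choose d := by
  have hp := (Fact.out : p.Prime).pos
  rw [(natCast_eq_natCast_iff _ _ _).2 (Choose.choose_modEq_choose_mod_mul_choose_div_nat (p := p))]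
  simp [Nat.add_mul_mod_self_left, Nat.add_mul_div_left _ _ hp, Nat.mod_eq_of_lt,
    Nat.div_eq_of_lt, ha, hc]

theorem sum_prod_erase_add_one_mul_sub_eq_zero (hp5 : 5 ≤ p) :
    ∑ i ∈ range (p - 1), ∏ j ∈ (range (p - 1)).erase i, (((j + 1) * (p - 1 - j) : ℕ) : ZMod p)
      = 0 := by
  have hneg : ∀ j ∈ range (p - 1),
      (((j + 1) * (p - 1 - j) : ℕ) : ZMod p) = -((j + 1 : ℕ) : ZMod p) ^ 2 := fun j hj => by
    have h : (((p - 1 - j) + (j + 1) : ℕ) : ZMod p) = 0 := by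
      rw [show p - 1 - j + (j + 1) = p by have := mem_range.1 hj; omega, natCast_self]
    rw [Nat.cast_add] at h
    rw [Nat.cast_mul, eq_neg_of_add_eq_zero_left h]
    ring
  have hne : ∀ j ∈ range (p - 1), ((j + 1 : ℕ) : ZMod p) ≠ 0 := fun j hj =>
    (natCast_eq_zero_iff _ p).not.2 <|
      Nat.not_dvd_of_pos_of_lt j.succ_pos (by have := mem_range.1 hj; omega)
  rw [sum_prod_erase_eq_prod_mul_sum_inv _ fun j hj => by
      rw [hneg j hj]; exact neg_ne_zero.2 (pow_ne_zero 2 (hne j hj)),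
    sum_congr rfl fun j hj => by rw [hneg j hj, inv_neg, ← inv_pow], sum_neg_distrib,
    sum_range_inv_sq_eq_zero hp5, neg_zero, mul_zero]

end ZMod

def blockProd (p t : ℕ) : ℕ := ∏ j ∈ range (p - 1), (t * p + j + 1)

theorem factorial_mul_eq_pow_mul_factorial_mul_prod_blockProd {p : ℕ} (hp : 0 < p) (m : ℕ) :
    (m * p)! = p ^ m * m ! * ∏ t ∈ range m, blockProd p t := by
  obtain ⟨q, rfl⟩ : ∃ q, p = q + 1 := ⟨p - 1, by omega⟩
  have hblock : ∀ t, ∏ j ∈ range (q + 1), (t * (q + 1) + j + 1)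
      = (q + 1) * (t + 1) * blockProd (q + 1) t := fun t => by
    rw [prod_range_succ, blockProd, Nat.add_sub_cancel]
    ring
  rw [← prod_range_add_one_eq_factorial, prod_range_eq_prod_blocks,
    prod_congr rfl fun t _ => hblock t, prod_mul_distrib, prod_mul_distrib, prod_const,
    card_range, prod_range_add_one_eq_factorial]

theorem blockProd_sq (p t : ℕ) :
    blockProd p t ^ 2 = ∏ j ∈ range (p - 1), ((j + 1) * (p - 1 - j) + p ^ 2 * (t ^ 2 + t)) := by
  rw [sq, blockProd]
  nth_rw 2 [← prod_range_reflect]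
  rw [← prod_mul_distrib]
  refine prod_congr rfl fun j hj => ?_
  have hj := mem_range.1 hj
  rw [show t * p + (p - 1 - 1 - j) + 1 = t * p + (p - 1 - j) by omega]
  generalize hb : p - 1 - j = b
  obtain rfl : p = j + 1 + b := by omega
  ring

theorem blockProd_coprime {p : ℕ} (hp : p.Prime) (t : ℕ) : (blockProd p t).Coprime p := by
  refine Nat.Coprime.prod_left fun j hj => ?_
  rw [Nat.coprime_comm, hp.coprime_iff_not_dvd, show t * p + j + 1 = (j + 1) + p * t by ring,
    Nat.dvd_add_left (dvd_mul_right p t)]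
  exact Nat.not_dvd_of_pos_of_lt j.succ_pos (by have := mem_range.1 hj; omega)

theorem choose_mul_prod_blockProd {p : ℕ} (hp : 0 < p) (b c : ℕ) :
    (b + c).choose b * ∏ t ∈ range (b + c), blockProd p t
      = ((b + c) * p).choose (b * p)
        * ((∏ t ∈ range b, blockProd p t) * ∏ t ∈ range c, blockProd p t) := by
  have hchoose : (b + c).choose b * b ! * c ! = (b + c)! := by
    simpa using Nat.choose_mul_factorial_mul_factorial (Nat.le_add_right b c)
  have hchoose_mul : ((b + c) * p).choose (b * p) * (b * p)! * (c * p)! = ((b + c) * p)! := by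
    simpa [add_mul] using
      Nat.choose_mul_factorial_mul_factorial (Nat.mul_le_mul_right p (Nat.le_add_right b c))
  refine Nat.eq_of_mul_eq_mul_left (by positivity : 0 < p ^ (b + c) * (b ! * c !)) ?_
  calc p ^ (b + c) * (b ! * c !) * ((b + c).choose b * ∏ t ∈ range (b + c), blockProd p t)
      = p ^ (b + c) * ((b + c).choose b * b ! * c !) * ∏ t ∈ range (b + c), blockProd p t := by
        ring
    _ = ((b + c) * p)! := by
        rw [hchoose, factorial_mul_eq_pow_mul_factorial_mul_prod_blockProd hp]
    _ = _ := by
      rw [← hchoose_mul, factorial_mul_eq_pow_mul_factorial_mul_prod_blockProd hp,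
        factorial_mul_eq_pow_mul_factorial_mul_prod_blockProd hp, pow_add]
      ring

theorem natCast_succ_mul_choose_sq {p n k : ℕ} (hp : 0 < p)
    (hk : IsUnit ((k + 1 : ℕ) : ZMod (p ^ 3))) :
    ((((n + 1) * p).choose (k + 1) : ℕ) : ZMod (p ^ 3)) ^ 2 = (p : ZMod (p ^ 3)) ^ 2
      * ((n + 1 : ℕ) * (p - 1 + p * n).choose k * ((k + 1 : ℕ) : ZMod (p ^ 3))⁻¹) ^ 2 := by
  have hN : (n + 1) * p = p - 1 + p * n + 1 := by
    rw [add_one_mul, mul_comm]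
    omega
  rw [hN, ZMod.natCast_add_one_choose_add_one hk, ← hN]
  push_cast
  ring

section

variable {p : ℕ} [Fact p.Prime]

theorem natCast_blockProd_sq (hp5 : 5 ≤ p) (t : ℕ) :
    ((blockProd p t ^ 2 : ℕ) : ZMod (p ^ 3)) = ((blockProd p 0 ^ 2 : ℕ) : ZMod (p ^ 3)) := by
  rw [blockProd_sq, blockProd_sq]
  simp only [zero_pow two_ne_zero, mul_zero, add_zero, Nat.cast_prod, Nat.cast_add]
  have hε : ((p ^ 2 * (t ^ 2 + t) : ℕ) : ZMod (p ^ 3)) * ((p ^ 2 * (t ^ 2 + t) : ℕ)) = 0 := by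
    rw [← Nat.cast_mul, ZMod.natCast_eq_zero_iff]
    exact Dvd.intro (p * (t ^ 2 + t) ^ 2) (by ring)
  rw [prod_add_of_mul_self_eq_zero hε, add_eq_left, Nat.cast_mul (p ^ 2), Nat.cast_pow, mul_assoc]
  apply ZMod.sq_mul_eq_zero_of_castHom_eq_zero
  simp only [map_mul, map_sum, map_prod, map_natCast]
  rw [ZMod.sum_prod_erase_add_one_mul_sub_eq_zero hp5, mul_zero]

theorem natCast_choose_mul_mul_sq (hp5 : 5 ≤ p) (a b : ℕ) :
    (((a * p).choose (b * p) : ℕ) : ZMod (p ^ 3)) ^ 2 = ((a.choose b : ℕ) : ZMod (p ^ 3)) ^ 2 := by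
  have hp := (Fact.out : p.Prime)
  rcases lt_or_ge a b with hab | hba
  · rw [choose_eq_zero_of_lt hab, choose_eq_zero_of_lt (Nat.mul_lt_mul_of_pos_right hab hp.pos)]
  obtain ⟨c, rfl⟩ := Nat.exists_eq_add_of_le hba
  set W := ((blockProd p 0 ^ 2 : ℕ) : ZMod (p ^ 3))
  have hW : IsUnit W := (ZMod.isUnit_iff_coprime _ _).2 ((blockProd_coprime hp 0).pow 2 3)
  have hprod : ∀ m, ((∏ t ∈ range m, blockProd p t : ℕ) : ZMod (p ^ 3)) ^ 2 = W ^ m := fun m => by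
    rw [← Nat.cast_pow, ← prod_pow, Nat.cast_prod,
      prod_congr rfl fun t _ => natCast_blockProd_sq hp5 t, prod_const, card_range]
  have h := congrArg (fun x : ℕ => (x : ZMod (p ^ 3)) ^ 2) (choose_mul_prod_blockProd hp.pos b c)
  simp only [Nat.cast_mul, mul_pow, hprod, ← pow_add] at h
  exact ((hW.pow _).mul_right_cancel h).symm

theorem sum_block_choose_sq_eq_zero (hp5 : 5 ≤ p) {n t : ℕ} (ht : t < n) :
    ∑ j ∈ range (p - 1), (((n * p).choose (t * p + j + 1) : ℕ) : ZMod (p ^ 3)) ^ 2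
      * (((n * p + (t * p + j + 1)).choose (t * p + j + 1) : ℕ) : ZMod (p ^ 3)) ^ 2 = 0 := by
  have hp := (Fact.out : p.Prime)
  obtain ⟨m, rfl⟩ : ∃ m, n = m + 1 := ⟨n - 1, by omega⟩
  have hunit : ∀ j ∈ range (p - 1), IsUnit ((t * p + j + 1 : ℕ) : ZMod (p ^ 3)) := fun j hj =>
    (ZMod.isUnit_iff_coprime _ _).2 <| Nat.Coprime.pow_right 3 <|
      (blockProd_coprime hp t).coprime_dvd_left (dvd_prod_of_mem (fun j => t * p + j + 1) hj)
  have hterm : ∀ j ∈ range (p - 1),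
      (((m + 1) * p).choose (t * p + j + 1) : ZMod (p ^ 3)) ^ 2
        * (((m + 1) * p + (t * p + j + 1)).choose (t * p + j + 1) : ZMod (p ^ 3)) ^ 2
      = (p : ZMod (p ^ 3)) ^ 2 * ((m + 1 : ℕ) * (p - 1 + p * m).choose (t * p + j)
        * ((t * p + j + 1 : ℕ) : ZMod (p ^ 3))⁻¹
        * (((m + 1) * p + (t * p + j + 1)).choose (t * p + j + 1) : ℕ)) ^ 2 := fun j hj => by
    rw [natCast_succ_mul_choose_sq hp.pos (hunit j hj)]
    ring
  rw [sum_congr rfl hterm, ← mul_sum]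
  apply ZMod.sq_mul_eq_zero_of_castHom_eq_zero
  have himage : ∀ j ∈ range (p - 1), ZMod.castHom (dvd_pow_self p three_ne_zero) (ZMod p)
      (((m + 1 : ℕ) * (p - 1 + p * m).choose (t * p + j)
        * ((t * p + j + 1 : ℕ) : ZMod (p ^ 3))⁻¹
        * (((m + 1) * p + (t * p + j + 1)).choose (t * p + j + 1) : ℕ)) ^ 2)
      = (((m + 1) * m.choose t * (m + 1 + t).choose t : ℕ) : ZMod p) ^ 2
        * ((j + 1 : ℕ) : ZMod p)⁻¹ ^ 2 := fun j hj => by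
    rw [map_pow, map_mul, map_mul, map_mul, ZMod.castHom_inv _ (hunit j hj)]
    replace hj := mem_range.1 hj
    simp only [map_natCast]
    rw [show t * p + j = j + p * t by ring, ZMod.natCast_choose_add_mul (by omega) (by omega),
      ZMod.natCast_sub_one_choose (by omega),
      show (m + 1) * p + (j + p * t + 1) = (j + 1) + p * (m + 1 + t) by ring,
      show j + p * t + 1 = (j + 1) + p * t by ring,
      ZMod.natCast_choose_add_mul (by omega) (by omega), choose_self]
    push_cast [ZMod.natCast_self]
    have hsign : ((-1 : ZMod p) ^ j) ^ 2 = 1 := by rw [← pow_mul, mul_comm, pow_mul]; simp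
    linear_combination
      ((m + 1 : ZMod p) * m.choose t * (m + 1 + t).choose t * ((j : ZMod p) + 1)⁻¹) ^ 2 * hsign
  rw [map_sum, sum_congr rfl himage, ← mul_sum, ZMod.sum_range_inv_sq_eq_zero hp5, mul_zero]

theorem natCast_apery_mul (hp5 : 5 ≤ p) (n : ℕ) :
    ((apery (n * p) : ℕ) : ZMod (p ^ 3)) = apery n := by
  have hp := (Fact.out : p.Prime)
  have hblock : ∀ t ∈ range n,
      ∑ j ∈ range p, (((n * p).choose (t * p + j) : ℕ) : ZMod (p ^ 3)) ^ 2
        * (((n * p + (t * p + j)).choose (t * p + j) : ℕ) : ZMod (p ^ 3)) ^ 2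
      = (((n * p).choose (t * p) : ℕ) : ZMod (p ^ 3)) ^ 2
        * (((n * p + t * p).choose (t * p) : ℕ) : ZMod (p ^ 3)) ^ 2 := fun t ht => by
    rw [show range p = range (p - 1 + 1) by rw [Nat.sub_add_cancel hp.one_le], sum_range_succ']
    simp only [← add_assoc (t * p), add_zero]
    rw [sum_block_choose_sq_eq_zero hp5 (mem_range.1 ht), zero_add]
  have hmult : ∀ t, (((n * p).choose (t * p) : ℕ) : ZMod (p ^ 3)) ^ 2
      * (((n * p + t * p).choose (t * p) : ℕ) : ZMod (p ^ 3)) ^ 2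
      = ((n.choose t : ℕ) : ZMod (p ^ 3)) ^ 2 * (((n + t).choose t : ℕ) : ZMod (p ^ 3)) ^ 2 :=
    fun t => by rw [← add_mul, natCast_choose_mul_mul_sq hp5, natCast_choose_mul_mul_sq hp5]
  simp only [apery, Nat.cast_sum, Nat.cast_mul, Nat.cast_pow]
  rw [sum_range_succ, sum_range_eq_sum_blocks, sum_congr rfl hblock]
  simp only [hmult]
  exact (sum_range_succ _ _).symm

end

theorem apery_mul_p_mod_p_cubed (p : ℕ) (hp : p.Prime) (hp5 : 5 ≤ p) (n : ℕ) :
    apery (p * n) ≡ apery n [MOD p ^ 3] := by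
  have := Fact.mk hp
  rw [← ZMod.natCast_eq_natCast_iff, mul_comm, natCast_apery_mul hp5]
end

section
/- For every prime p and every d ∈ {0, 1, ..., p−1}, A(d) ≡ A(p − 1 − d) (mod p), where A denotes the Apéry numbers. -/
/-!
Reduce modulo `p` and write `m = p - 1 - d`. Since `m ≡ -(d + 1)`, the falling factorial
`m (m - 1) ⋯ (m - k + 1)` is `(-1)ᵏ (d + 1) (d + 2) ⋯ (d + k)`, so `C(m, k) ≡ (-1)ᵏ C(d + k, k)`
for `k < p`. Hence `A(d) ≡ ∑_{k < p} C(d, k)² C(m, k)²`, which is symmetric in `d` and `m`.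
-/

open Finset Polynomial

theorem Nat.cast_descFactorial_eq_neg_one_pow_mul {R : Type*} [CommRing R] {m d : ℕ}
    (h : ((m + d + 1 : ℕ) : R) = 0) (k : ℕ) :
    (m.descFactorial k : R) = (-1) ^ k * (d + k).descFactorial k := by
  have hm : (m : R) = -(d + 1 : ℕ) := by
    push_cast at h ⊢
    linear_combination h
  have hasc : (ascPochhammer R k).eval ((d + 1 : ℕ) : R) =
      (-1) ^ k * (descPochhammer R k).eval (-((d + 1 : ℕ) : R)) := by
    rw [← ascPochhammer_eval_neg_eq_descPochhammer, neg_neg]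
  rw [← descPochhammer_eval_eq_descFactorial, hm, Nat.add_descFactorial_eq_ascFactorial,
    ← ascPochhammer_nat_eq_ascFactorial, ascPochhammer_eval_cast, hasc, ← mul_assoc, ← pow_add,
    ← two_mul, pow_mul, neg_one_sq, one_pow, one_mul]

theorem ZMod.natCast_choose_eq_neg_one_pow_mul {p m d k : ℕ} (hp : p.Prime) (hmd : m + d + 1 = p)
    (hk : k < p) : (m.choose k : ZMod p) = (-1) ^ k * (d + k).choose k := by
  have := Fact.mk hp
  have hfac : (k.factorial : ZMod p) ≠ 0 := by
    rw [Ne, ZMod.natCast_eq_zero_iff, hp.dvd_factorial]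
    omega
  have hdesc := Nat.cast_descFactorial_eq_neg_one_pow_mul (R := ZMod p) (m := m) (d := d)
    (by rw [hmd, ZMod.natCast_self]) k
  rw [Nat.descFactorial_eq_factorial_mul_choose, Nat.descFactorial_eq_factorial_mul_choose] at hdesc
  push_cast at hdesc
  exact mul_left_cancel₀ hfac (by rw [hdesc]; ring)

theorem natCast_apery_eq_sum {p m d : ℕ} (hp : p.Prime) (hmd : m + d + 1 = p) :
    (apery d : ZMod p) = ∑ k ∈ range p, (d.choose k : ZMod p) ^ 2 * (m.choose k : ZMod p) ^ 2 := by
  rw [apery, Nat.cast_sum, sum_subset (range_subset_range.mpr (by omega : d + 1 ≤ p))]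
  · refine sum_congr rfl fun k hk => ?_
    rw [ZMod.natCast_choose_eq_neg_one_pow_mul hp hmd (mem_range.mp hk), mul_pow, ← pow_mul,
      pow_mul', neg_one_sq, one_pow, one_mul, Nat.cast_mul, Nat.cast_pow, Nat.cast_pow]
  · intro k _ hk
    rw [Nat.choose_eq_zero_of_lt (by simpa using hk)]
    simp

theorem apery_reflection_mod_p (p : ℕ) (hp : p.Prime) (d : ℕ) (hd : d ≤ p - 1) :
    apery d ≡ apery (p - 1 - d) [MOD p] := by
  have hp1 := hp.one_le
  rw [← ZMod.natCast_eq_natCast_iff, natCast_apery_eq_sum hp (m := p - 1 - d) (by omega),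
    natCast_apery_eq_sum hp (m := d) (by omega)]
  exact sum_congr rfl fun k _ => mul_comm _ _
end

section
/- For every prime p ≥ 5 and every natural number n all of whose base-p digits belong to {0, p−1}, A(n) ≡ 1 (mod p^3), where A denotes the Apéry numbers. -/
open Finset
open scoped Nat

theorem Finset.sum_range_succ_filter_dvd {M : Type*} [AddCommMonoid M] (f : ℕ → M) {p : ℕ}
    (hp : 0 < p) (n : ℕ) :
    ∑ k ∈ (range (n + 1)).filter (p ∣ ·), f k = ∑ q ∈ range (n / p + 1), f (p * q) := by
  rw [← sum_image fun x _ y _ h ↦ Nat.eq_of_mul_eq_mul_left hp h]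
  congr 1
  ext k
  simp only [mem_filter, mem_range, mem_image, Nat.lt_succ_iff]
  constructor
  · rintro ⟨hk, q, rfl⟩
    exact ⟨q, (Nat.le_div_iff_mul_le hp).2 (by rwa [mul_comm]), rfl⟩
  · rintro ⟨q, hq, rfl⟩
    exact ⟨by rw [mul_comm]; exact (Nat.le_div_iff_mul_le hp).1 hq, dvd_mul_right p q⟩

def DigitsZeroOrPred (p n : ℕ) : Prop := ∀ e ∈ p.digits n, e = 0 ∨ e = p - 1

namespace DigitsZeroOrPred

variable {p n : ℕ}

theorem mod_eq (hp : 1 < p) (h : DigitsZeroOrPred p n) : n % p = 0 ∨ n % p = p - 1 := by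
  rcases n.eq_zero_or_pos with rfl | hn
  · simp
  · exact h _ (by rw [Nat.digits_def' hp hn]; exact List.mem_cons_self)

theorem div (hp : 1 < p) (h : DigitsZeroOrPred p n) : DigitsZeroOrPred p (n / p) := by
  rcases n.eq_zero_or_pos with rfl | hn
  · simpa using h
  · exact fun e he ↦ h e (by rw [Nat.digits_def' hp hn]; exact List.mem_cons_of_mem _ he)

theorem pred_le (hp : 1 < p) (h : DigitsZeroOrPred p n) (hn : n ≠ 0) : p - 1 ≤ n := by
  rcases h.mod_eq hp with h | h
  · exact (Nat.sub_le p 1).trans (Nat.le_of_dvd (by omega) (Nat.dvd_of_mod_eq_zero h))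
  · exact h ▸ Nat.mod_le n p

end DigitsZeroOrPred

namespace Apery

theorem sq_eq_sq_of_mul_neg_one_pow_eq_neg {R : Type*} [CommRing R] {x y : R} {j : ℕ}
    (h : x * (-1) ^ j = -y) : x ^ 2 = y ^ 2 := by
  rw [← neg_sq y, ← h, mul_pow, ← pow_mul, pow_mul', neg_one_sq, one_pow, mul_one]

theorem sq_modEq_sq_of_factorization_eq {p a b : ℕ} (hv : a.factorization p = b.factorization p)
    (hu : ((ordCompl[p] a : ℕ) : ZMod p) ^ 2 = ((ordCompl[p] b : ℕ) : ZMod p) ^ 2) :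
    a ^ 2 ≡ b ^ 2 [MOD p ^ (2 * a.factorization p + 1)] := by
  have hu' : (ordCompl[p] a) ^ 2 ≡ (ordCompl[p] b) ^ 2 [MOD p] :=
    (ZMod.natCast_eq_natCast_iff _ _ _).1 (by push_cast; exact hu)
  have ea : a ^ 2 = p ^ (2 * a.factorization p) * (ordCompl[p] a) ^ 2 := by
    conv_lhs => rw [← Nat.ordProj_mul_ordCompl_eq_self a p]
    ring
  have eb : b ^ 2 = p ^ (2 * a.factorization p) * (ordCompl[p] b) ^ 2 := by
    conv_lhs => rw [← Nat.ordProj_mul_ordCompl_eq_self b p]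
    rw [hv]; ring
  rw [ea, eb, pow_succ]
  exact hu'.mul_left' _

variable {p : ℕ} [hp : Fact p.Prime]

theorem factorization_factorial_mul_add (t : ℕ) {c : ℕ} (hc : c < p) :
    (p * t + c)!.factorization p = (t !).factorization p + t := by
  rw [Nat.factorization_def _ hp.out, padicValNat_factorial_mul_add t hc,
    ← Nat.factorization_def _ hp.out, Nat.factorization_factorial_mul hp.out]

omit hp in
theorem factorization_factorial_succ (M : ℕ) :
    (M + 1)!.factorization p = (M + 1).factorization p + (M !).factorization p := by
  rw [Nat.factorial_succ, Nat.factorization_mul M.succ_ne_zero M.factorial_ne_zero,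
    Finsupp.add_apply]

omit hp in
theorem ordCompl_factorial_succ (M : ℕ) :
    ordCompl[p] (M + 1)! = ordCompl[p] (M + 1) * ordCompl[p] M ! := by
  rw [Nat.factorial_succ, Nat.ordCompl_mul]

theorem cast_ordCompl_factorial_ne_zero (M : ℕ) : ((ordCompl[p] M ! : ℕ) : ZMod p) ≠ 0 := by
  rw [Ne, ZMod.natCast_eq_zero_iff]
  exact Nat.not_dvd_ordCompl hp.out M.factorial_ne_zero

theorem cast_ordCompl_factorial_mul_add_eq_mul_factorial (t : ℕ) {c : ℕ} (hc : c < p) :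
    ((ordCompl[p] (p * t + c)! : ℕ) : ZMod p) = (ordCompl[p] (p * t)! : ℕ) * c ! := by
  induction c with
  | zero => simp
  | succ c ih =>
    have hndvd : ¬ p ∣ p * t + (c + 1) := fun h ↦
      Nat.not_dvd_of_pos_of_lt c.succ_pos hc ((Nat.dvd_add_right (dvd_mul_right p t)).1 h)
    rw [← add_assoc, ordCompl_factorial_succ, add_assoc,
      (Nat.ordCompl_eq_self_iff_zero_or_not_dvd _ hp.out).2 (Or.inr hndvd), Nat.factorial_succ]
    push_cast
    rw [ih (by omega), ZMod.natCast_self]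
    ring

theorem cast_ordCompl_factorial_mul (t : ℕ) :
    ((ordCompl[p] (p * t)! : ℕ) : ZMod p) = (-1) ^ t * (ordCompl[p] t ! : ℕ) := by
  induction t with
  | zero => simp
  | succ t ih =>
    have hp1 : p - 1 < p := Nat.sub_lt hp.out.pos one_pos
    have hsucc : p * (t + 1) = p * t + (p - 1) + 1 := by
      have := hp.out.one_le; rw [mul_add_one]; omega
    rw [ordCompl_factorial_succ t]
    conv_lhs => rw [hsucc, ordCompl_factorial_succ, ← hsucc]
    have hcompl := Nat.ordCompl_self_pow_mul (t + 1) 1 hp.out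
    rw [pow_one] at hcompl
    rw [hcompl]
    push_cast
    rw [cast_ordCompl_factorial_mul_add_eq_mul_factorial t hp1, ih, ZMod.wilsons_lemma]
    ring

theorem cast_ordCompl_factorial_mul_add (t : ℕ) {c : ℕ} (hc : c < p) :
    ((ordCompl[p] (p * t + c)! : ℕ) : ZMod p) = (-1) ^ t * c ! * (ordCompl[p] t ! : ℕ) := by
  rw [cast_ordCompl_factorial_mul_add_eq_mul_factorial t hc, cast_ordCompl_factorial_mul]
  ring

theorem cast_factorial_mul_factorial_eq_neg_one_pow {j l : ℕ} (h : j + l + 1 = p) :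
    (j ! * l ! : ZMod p) = (-1) ^ (j + 1) := by
  induction j generalizing l with
  | zero =>
    obtain rfl : l = p - 1 := by omega
    simp [ZMod.wilsons_lemma]
  | succ j ih =>
    have hl : ((l + 1 : ℕ) : ZMod p) = -(j + 1 : ℕ) := by
      rw [eq_neg_iff_add_eq_zero, ← Nat.cast_add, ← ZMod.natCast_self p]
      congr 1; omega
    have := ih (l := l + 1) (by omega)
    rw [Nat.factorial_succ l] at this
    rw [Nat.factorial_succ j, pow_succ, ← this]
    push_cast at hl ⊢
    rw [hl]
    ring

theorem sum_Ico_inv_sq_eq_zero (hp5 : 5 ≤ p) : ∑ k ∈ Ico 1 p, ((k : ZMod p)⁻¹) ^ 2 = 0 := by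
  have hrange : ∑ k ∈ range p, ((k : ZMod p)⁻¹) ^ 2 = ∑ x : ZMod p, (x⁻¹) ^ 2 := by
    rw [← sum_image (f := fun x : ZMod p ↦ (x⁻¹) ^ 2) fun a ha b hb h ↦ by
      simpa [Nat.mod_eq_of_lt (mem_range.1 ha), Nat.mod_eq_of_lt (mem_range.1 hb)] using
        (ZMod.natCast_eq_natCast_iff' a b p).1 h]
    congr 1
    ext x
    simpa using ⟨x.val, ZMod.val_lt x, ZMod.natCast_zmod_val x⟩
  rw [range_eq_Ico, sum_eq_sum_Ico_succ_bot hp.out.pos] at hrange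
  simp only [Nat.cast_zero, inv_zero, ne_eq, OfNat.ofNat_ne_zero, not_false_eq_true, zero_pow,
    zero_add] at hrange
  rw [hrange, Fintype.sum_equiv (Equiv.inv (ZMod p)) (fun x ↦ x⁻¹ ^ 2) (· ^ 2) fun _ ↦ rfl]
  exact FiniteField.sum_pow_lt_card_sub_one (ZMod p) 2 (by rw [ZMod.card]; omega)

theorem sum_sq_modEq_zero_of_sq_mul_modEq (hp5 : 5 ≤ p) {a : ℕ → ℕ} {N : ℕ}
    (h : ∀ k ∈ Ico 1 p, (k * a k) ^ 2 ≡ (p * N) ^ 2 [MOD p ^ 3]) :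
    ∑ k ∈ Ico 1 p, a k ^ 2 ≡ 0 [MOD p ^ 3] := by
  have hdvd : ∀ k ∈ Ico 1 p, p ∣ a k := by
    intro k hk
    rw [mem_Ico] at hk
    have h2 : p ^ 2 ∣ (k * a k) ^ 2 := ((h k (mem_Ico.2 hk)).dvd_iff
      (pow_dvd_pow p (by norm_num))).2 (by rw [mul_pow]; exact dvd_mul_right _ _)
    rw [Nat.pow_dvd_pow_iff two_ne_zero] at h2
    exact (hp.out.dvd_mul.1 h2).resolve_left (Nat.not_dvd_of_pos_of_lt hk.1 hk.2)
  have hb : ∀ k ∈ Ico 1 p, a k = p * (a k / p) := fun k hk ↦ (Nat.mul_div_cancel' (hdvd k hk)).symm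
  have hb' : ∀ k ∈ Ico 1 p,
      ((a k / p : ℕ) : ZMod p) ^ 2 = (N : ZMod p) ^ 2 * ((k : ZMod p)⁻¹) ^ 2 := by
    intro k hk
    have h' := h k hk
    rw [hb k hk, mul_left_comm, mul_pow p, mul_pow p, pow_succ p 2] at h'
    have := (ZMod.natCast_eq_natCast_iff _ _ _).2
      (Nat.ModEq.mul_left_cancel' (pow_ne_zero 2 hp.out.ne_zero) h')
    have hk0 : (k : ZMod p) ≠ 0 := by
      rw [Ne, ZMod.natCast_eq_zero_iff]
      exact Nat.not_dvd_of_pos_of_lt (mem_Ico.1 hk).1 (mem_Ico.1 hk).2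
    push_cast at this
    field_simp
    linear_combination this
  have hp_dvd : p ∣ ∑ k ∈ Ico 1 p, (a k / p) ^ 2 := by
    rw [← ZMod.natCast_eq_zero_iff]
    push_cast
    rw [sum_congr rfl hb', ← mul_sum, sum_Ico_inv_sq_eq_zero hp5, mul_zero]
  rw [sum_congr rfl fun k hk ↦ by rw [hb k hk, mul_pow], ← mul_sum, pow_succ]
  exact Nat.modEq_zero_iff_dvd.2 (mul_dvd_mul_left _ hp_dvd)

def aperyTerm (n k : ℕ) : ℕ := n.choose k * (n + k).choose k

theorem apery_eq_sum_aperyTerm_sq (n : ℕ) :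
    apery n = ∑ k ∈ range (n + 1), aperyTerm n k ^ 2 := by
  simp only [apery, aperyTerm, mul_pow]

theorem aperyTerm_zero_right (n : ℕ) : aperyTerm n 0 = 1 := by
  simp [aperyTerm]

theorem aperyTerm_ne_zero {n k : ℕ} (hkn : k ≤ n) : aperyTerm n k ≠ 0 :=
  mul_ne_zero (Nat.choose_pos hkn).ne' (Nat.choose_pos (by omega)).ne'

theorem aperyTerm_mul_factorial (s k : ℕ) :
    aperyTerm (s + k) k * (k ! ^ 2 * s !) = (s + 2 * k)! := by
  have h₁ := Nat.add_choose_mul_factorial_mul_factorial s k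
  have h₂ := Nat.add_choose_mul_factorial_mul_factorial (s + k) k
  rw [add_assoc, ← two_mul] at h₂
  apply Nat.eq_of_mul_eq_mul_right (s + k).factorial_pos
  calc aperyTerm (s + k) k * (k ! ^ 2 * s !) * (s + k)!
      = ((s + k).choose k * s ! * k !) * ((s + 2 * k).choose k * (s + k)! * k !) := by
        rw [aperyTerm, add_assoc, ← two_mul]; ring
    _ = (s + 2 * k)! * (s + k)! := by rw [h₁, h₂, mul_comm]

omit hp in
theorem factorization_aperyTerm (s k : ℕ) :
    (aperyTerm (s + k) k).factorization p + 2 * (k !).factorization p + (s !).factorization p =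
      (s + 2 * k)!.factorization p := by
  rw [← aperyTerm_mul_factorial,
    Nat.factorization_mul (aperyTerm_ne_zero (by omega)) (by positivity),
    Nat.factorization_mul (by positivity) s.factorial_ne_zero, Nat.factorization_pow]
  simp only [Finsupp.add_apply, Finsupp.smul_apply, smul_eq_mul]
  omega

omit hp in
theorem ordCompl_aperyTerm (s k : ℕ) :
    ordCompl[p] (aperyTerm (s + k) k) * ((ordCompl[p] k !) ^ 2 * ordCompl[p] s !) =
      ordCompl[p] (s + 2 * k)! := by
  rw [← aperyTerm_mul_factorial, Nat.ordCompl_mul, Nat.ordCompl_mul, sq, sq, Nat.ordCompl_mul]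

-- `s = pt + c` and `k = pq + r` are split at their last base-`p` digit, and `s + 2k = pL + c'`.
theorem factorization_aperyTerm_of_digits {t c q r L c' : ℕ} (hc : c < p) (hr : r < p)
    (hc' : c' < p) (h : p * t + c + 2 * (p * q + r) = p * L + c') :
    (aperyTerm (p * t + c + (p * q + r)) (p * q + r)).factorization p +
        2 * (q !).factorization p + (t !).factorization p + (2 * q + t) =
      (L !).factorization p + L := by
  have := factorization_aperyTerm (p := p) (p * t + c) (p * q + r)
  rw [h, factorization_factorial_mul_add _ hc', factorization_factorial_mul_add _ hc,
    factorization_factorial_mul_add _ hr] at this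
  omega

theorem cast_ordCompl_aperyTerm_of_digits {t c q r L c' : ℕ} (hc : c < p) (hr : r < p)
    (hc' : c' < p) (h : p * t + c + 2 * (p * q + r) = p * L + c') :
    ((ordCompl[p] (aperyTerm (p * t + c + (p * q + r)) (p * q + r)) : ℕ) : ZMod p) *
        (((-1) ^ q * r ! * (ordCompl[p] q ! : ℕ)) ^ 2 * ((-1) ^ t * c ! * (ordCompl[p] t ! : ℕ))) =
      (-1) ^ L * c' ! * (ordCompl[p] L ! : ℕ) := by
  have := congrArg (Nat.cast : ℕ → ZMod p) (ordCompl_aperyTerm (p := p) (p * t + c) (p * q + r))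
  push_cast at this
  rwa [h, cast_ordCompl_factorial_mul_add _ hc', cast_ordCompl_factorial_mul_add _ hc,
    cast_ordCompl_factorial_mul_add _ hr] at this

theorem factorization_ordCompl_aperyTerm_mul_add_mul {m d q : ℕ} (hd : d < p) (hqm : q ≤ m) :
    (aperyTerm (p * m + d) (p * q)).factorization p = (aperyTerm m q).factorization p ∧
      ((ordCompl[p] (aperyTerm (p * m + d) (p * q)) : ℕ) : ZMod p) =
        (ordCompl[p] (aperyTerm m q) : ℕ) := by
  obtain ⟨t, rfl⟩ := Nat.exists_eq_add_of_le' hqm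
  have hL : p * t + d + 2 * (p * q + 0) = p * (t + 2 * q) + d := by ring
  have hv := factorization_aperyTerm_of_digits hd hp.out.pos hd hL
  have hu := cast_ordCompl_aperyTerm_of_digits hd hp.out.pos hd hL
  have hu' := congrArg (Nat.cast : ℕ → ZMod p) (ordCompl_aperyTerm (p := p) t q)
  simp only [add_zero, Nat.factorial_zero, Nat.cast_one, mul_one] at hv hu
  push_cast at hu'
  rw [show p * (t + q) + d = p * t + d + p * q by ring]
  refine ⟨by linarith [factorization_aperyTerm (p := p) t q], ?_⟩
  have hne : ((-1) ^ (t + 2 * q) * d ! * ((ordCompl[p] q ! : ℕ) ^ 2 * (ordCompl[p] t ! : ℕ)) :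
      ZMod p) ≠ 0 := by
    refine mul_ne_zero (mul_ne_zero (pow_ne_zero _ (neg_ne_zero.2 one_ne_zero)) ?_)
      (mul_ne_zero (pow_ne_zero _ (cast_ordCompl_factorial_ne_zero q))
        (cast_ordCompl_factorial_ne_zero t))
    rw [Ne, ZMod.natCast_eq_zero_iff, hp.out.dvd_factorial]
    omega
  refine mul_right_cancel₀ hne ?_
  linear_combination hu - (-1) ^ (t + 2 * q) * (d ! : ZMod p) * hu'

theorem factorization_aperyTerm_add_one_le {m d q r : ℕ} (hd : d = 0 ∨ d = p - 1) (hr : 0 < r)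
    (hrp : r < p) (hkn : p * q + r ≤ p * m + d) :
    (aperyTerm m q).factorization p + 1 ≤ (aperyTerm (p * m + d) (p * q + r)).factorization p := by
  rcases hd with rfl | rfl
  -- for `d = 0` the last digit carries in `(n - k) + k`, for `d = p - 1` in `n + k`
  · obtain ⟨t, rfl⟩ : ∃ t, m = t + 1 + q := by
      refine ⟨m - q - 1, ?_⟩
      have : q < m := Nat.lt_of_mul_lt_mul_left (a := p) (by omega)
      omega
    have hL : p * t + (p - r) + 2 * (p * q + r) = p * (t + 1 + 2 * q) + r := by
      have : p * (t + 1 + 2 * q) = p * t + p + 2 * (p * q) := by ring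
      omega
    have hv := factorization_aperyTerm_of_digits (by omega) hrp hrp hL
    have hv' := factorization_aperyTerm (p := p) (t + 1) q
    have hs := factorization_factorial_succ (p := p) t
    rw [show p * (t + 1 + q) + 0 = p * t + (p - r) + (p * q + r) by
      have : p * (t + 1 + q) = p * t + p + p * q := by ring
      omega]
    omega
  · obtain ⟨t, rfl⟩ : ∃ t, m = t + q := by
      refine ⟨m - q, ?_⟩
      have : q < m + 1 := Nat.lt_of_mul_lt_mul_left (a := p) (by rw [mul_add_one]; omega)
      omega
    have hL : p * t + (p - 1 - r) + 2 * (p * q + r) = p * (t + 2 * q + 1) + (r - 1) := by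
      have : p * (t + 2 * q + 1) = p * t + 2 * (p * q) + p := by ring
      omega
    have hv := factorization_aperyTerm_of_digits (by omega) hrp (by omega) hL
    have hv' := factorization_aperyTerm (p := p) t q
    have hs := factorization_factorial_succ (p := p) (t + 2 * q)
    rw [show p * (t + q) + (p - 1) = p * t + (p - 1 - r) + (p * q + r) by
      have : p * (t + q) = p * t + p * q := by ring
      omega]
    omega

theorem one_le_factorization_aperyTerm {n k : ℕ} (hn : DigitsZeroOrPred p n) (hk : 0 < k)
    (hkn : k ≤ n) : 1 ≤ (aperyTerm n k).factorization p := by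
  induction n using Nat.strong_induction_on generalizing k with
  | _ n ih =>
  have hn' := Nat.div_add_mod n p
  have hk' := Nat.div_add_mod k p
  have hqm : k / p ≤ n / p := Nat.div_le_div_right hkn
  by_cases hpk : p ∣ k
  · have h := (factorization_ordCompl_aperyTerm_mul_add_mul (Nat.mod_lt n hp.out.pos) hqm).1
    rw [hn', Nat.mul_div_cancel' hpk] at h
    rw [h]
    exact ih _ (Nat.div_lt_self (by omega) hp.out.one_lt) (hn.div hp.out.one_lt)
      (Nat.div_pos (Nat.le_of_dvd hk hpk) hp.out.pos) hqm
  · have h := factorization_aperyTerm_add_one_le (hn.mod_eq hp.out.one_lt)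
      (Nat.pos_of_ne_zero (mt Nat.dvd_of_mod_eq_zero hpk)) (Nat.mod_lt k hp.out.pos)
      (by rwa [hn', hk'])
    rw [hn', hk'] at h
    omega

theorem sq_aperyTerm_mul_add_mul_modEq {m d q : ℕ} (hm : DigitsZeroOrPred p m) (hd : d < p)
    (hqm : q ≤ m) : aperyTerm (p * m + d) (p * q) ^ 2 ≡ aperyTerm m q ^ 2 [MOD p ^ 3] := by
  rcases q.eq_zero_or_pos with rfl | hq
  · simp [aperyTerm_zero_right, Nat.ModEq.refl]
  obtain ⟨hv, hu⟩ := factorization_ordCompl_aperyTerm_mul_add_mul hd hqm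
  have hv1 := one_le_factorization_aperyTerm hm hq hqm
  exact (sq_modEq_sq_of_factorization_eq hv (by rw [hu])).of_dvd (pow_dvd_pow p (by omega))

theorem sq_aperyTerm_modEq_zero {n k : ℕ} (hn : DigitsZeroOrPred p n) (hpk : ¬ p ∣ k)
    (hk : p ≤ k) (hkn : k ≤ n) : aperyTerm n k ^ 2 ≡ 0 [MOD p ^ 3] := by
  have hn' := Nat.div_add_mod n p
  have hk' := Nat.div_add_mod k p
  have h := factorization_aperyTerm_add_one_le (hn.mod_eq hp.out.one_lt)
    (Nat.pos_of_ne_zero (mt Nat.dvd_of_mod_eq_zero hpk)) (Nat.mod_lt k hp.out.pos)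
    (by rwa [hn', hk'])
  rw [hn', hk'] at h
  have h1 := one_le_factorization_aperyTerm (hn.div hp.out.one_lt)
    (Nat.div_pos hk hp.out.pos) (Nat.div_le_div_right hkn)
  have hdvd : p ^ 2 ∣ aperyTerm n k :=
    (hp.out.pow_dvd_iff_le_factorization (aperyTerm_ne_zero hkn)).2 (by omega)
  exact Nat.modEq_zero_iff_dvd.2
    ((pow_dvd_pow p (by norm_num : 3 ≤ 2 * 2)).trans (pow_mul p 2 2 ▸ pow_dvd_pow_of_dvd hdvd 2))

theorem factorization_ordCompl_aperyTerm_of_single_carry {m c k c' : ℕ} (hc : c < p)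
    (hk : k < p) (hc' : c' < p) (h : p * m + c + 2 * k = p * (m + 1) + c') :
    (aperyTerm (p * m + c + k) k).factorization p = (m + 1).factorization p + 1 ∧
      ((ordCompl[p] (aperyTerm (p * m + c + k) k) : ℕ) : ZMod p) * k ! ^ 2 * c ! =
        -(c' ! * (ordCompl[p] (m + 1) : ℕ)) := by
  have h' : p * m + c + 2 * (p * 0 + k) = p * (m + 1) + c' := by rwa [mul_zero, zero_add]
  have hv := factorization_aperyTerm_of_digits hc hk hc' h'
  have hu := cast_ordCompl_aperyTerm_of_digits hc hk hc' h'
  simp only [mul_zero, zero_add, pow_zero, one_mul, Nat.factorial_zero, Nat.factorization_one,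
    Finsupp.coe_zero, Pi.zero_apply, add_zero, ordCompl_factorial_succ m] at hv hu
  refine ⟨by rw [factorization_factorial_succ] at hv; omega, ?_⟩
  push_cast at hu
  refine mul_right_cancel₀ (mul_ne_zero (pow_ne_zero m (neg_ne_zero.2 one_ne_zero))
    (cast_ordCompl_factorial_ne_zero (p := p) m)) ?_
  linear_combination hu

theorem sq_mul_modEq_sq_mul {a k N : ℕ} (hk : ¬ p ∣ k) (ha : a ≠ 0) (hN : N ≠ 0)
    (hv : a.factorization p = N.factorization p + 1)
    (hu : ((k * ordCompl[p] a : ℕ) : ZMod p) ^ 2 = ((ordCompl[p] N : ℕ) : ZMod p) ^ 2) :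
    (k * a) ^ 2 ≡ (p * N) ^ 2 [MOD p ^ 3] := by
  have hk0 : k ≠ 0 := by rintro rfl; exact hk (dvd_zero p)
  have hkv : k.factorization p = 0 := Nat.factorization_eq_zero_of_not_dvd hk
  have hkc : ordCompl[p] k = k := by rw [hkv, pow_zero, Nat.div_one]
  have hpN : ordCompl[p] (p * N) = ordCompl[p] N := by
    simpa using Nat.ordCompl_self_pow_mul N 1 hp.out
  have hv' : (k * a).factorization p = (p * N).factorization p := by
    rw [Nat.factorization_mul hk0 ha, Nat.factorization_mul hp.out.ne_zero hN]
    simp [hkv, hv, hp.out.factorization_self, add_comm]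
  refine (sq_modEq_sq_of_factorization_eq hv' ?_).of_dvd (pow_dvd_pow p ?_)
  · rwa [Nat.ordCompl_mul, hkc, hpN]
  · rw [Nat.factorization_mul hk0 ha, Finsupp.add_apply, hkv, hv]
    omega

theorem sq_mul_aperyTerm_mul_add_pred_modEq {m k : ℕ} (hk : 0 < k) (hkp : k < p) :
    (k * aperyTerm (p * m + (p - 1)) k) ^ 2 ≡ (p * (m + 1)) ^ 2 [MOD p ^ 3] := by
  have h : p * m + (p - 1 - k) + 2 * k = p * (m + 1) + (k - 1) := by
    rw [mul_add_one]; omega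
  obtain ⟨hv, hu⟩ := factorization_ordCompl_aperyTerm_of_single_carry (by omega) hkp (by omega) h
  rw [show p * m + (p - 1) = p * m + (p - 1 - k) + k by omega]
  refine sq_mul_modEq_sq_mul (Nat.not_dvd_of_pos_of_lt hk hkp) (aperyTerm_ne_zero (by omega))
    m.succ_ne_zero hv ?_
  have hW := cast_factorial_mul_factorial_eq_neg_one_pow (p := p) (j := k) (l := p - 1 - k)
    (by omega)
  have hkf : (k ! : ZMod p) = k * (k - 1)! := by
    rw [← Nat.cast_mul, Nat.mul_factorial_pred hk.ne']
  have hfne : (k ! : ZMod p) ≠ 0 := by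
    rw [Ne, ZMod.natCast_eq_zero_iff, hp.out.dvd_factorial]; omega
  set U : ZMod p := ((ordCompl[p] (aperyTerm (p * m + (p - 1 - k) + k) k) : ℕ) : ZMod p)
  set V : ZMod p := ((ordCompl[p] (m + 1) : ℕ) : ZMod p)
  have h1 : (k * U) * (k ! * (p - 1 - k)!) * k ! = -V * k ! := by
    linear_combination (k : ZMod p) * hu + V * hkf
  have h2 : (k * U) * (-1) ^ (k + 1) = -V := by rw [← hW]; exact mul_right_cancel₀ hfne h1
  rw [Nat.cast_mul, sq_eq_sq_of_mul_neg_one_pow_eq_neg h2]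

theorem sq_mul_aperyTerm_mul_succ_modEq {m k : ℕ} (hk : 0 < k) (hkp : k < p) :
    (k * aperyTerm (p * (m + 1)) k) ^ 2 ≡ (p * (m + 1)) ^ 2 [MOD p ^ 3] := by
  have h : p * m + (p - k) + 2 * k = p * (m + 1) + k := by
    rw [mul_add_one]; omega
  obtain ⟨hv, hu⟩ := factorization_ordCompl_aperyTerm_of_single_carry (by omega) hkp hkp h
  rw [show aperyTerm (p * (m + 1)) k = aperyTerm (p * m + (p - k) + k) k by
    rw [mul_add_one]; congr 1; omega]
  refine sq_mul_modEq_sq_mul (Nat.not_dvd_of_pos_of_lt hk hkp) (aperyTerm_ne_zero (by omega))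
    m.succ_ne_zero hv ?_
  have hW := cast_factorial_mul_factorial_eq_neg_one_pow (p := p) (j := k - 1) (l := p - k)
    (by omega)
  rw [Nat.sub_add_cancel hk] at hW
  have hkf : (k ! : ZMod p) = k * (k - 1)! := by
    rw [← Nat.cast_mul, Nat.mul_factorial_pred hk.ne']
  have hfne : (k ! : ZMod p) ≠ 0 := by
    rw [Ne, ZMod.natCast_eq_zero_iff, hp.out.dvd_factorial]; omega
  set U : ZMod p := ((ordCompl[p] (aperyTerm (p * m + (p - k) + k) k) : ℕ) : ZMod p)
  set V : ZMod p := ((ordCompl[p] (m + 1) : ℕ) : ZMod p)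
  have h1 : (k * U) * ((k - 1)! * (p - k)!) * k ! = -V * k ! := by
    linear_combination hu - U * k ! * (p - k)! * hkf
  have h2 : (k * U) * (-1) ^ k = -V := by rw [← hW]; exact mul_right_cancel₀ hfne h1
  rw [Nat.cast_mul, sq_eq_sq_of_mul_neg_one_pow_eq_neg h2]

theorem sum_Ico_sq_aperyTerm_modEq_zero (hp5 : 5 ≤ p) {n : ℕ}
    (hn : n % p = 0 ∨ n % p = p - 1) (hn0 : n ≠ 0) :
    ∑ k ∈ Ico 1 p, aperyTerm n k ^ 2 ≡ 0 [MOD p ^ 3] := by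
  have hn' := Nat.div_add_mod n p
  rcases hn with h | h
  · obtain ⟨m, hm⟩ : ∃ m, n / p = m + 1 := Nat.exists_eq_succ_of_ne_zero (by
      rintro h0; rw [h0, h] at hn'; omega)
    rw [h, add_zero, hm] at hn'
    subst hn'
    exact sum_sq_modEq_zero_of_sq_mul_modEq hp5 fun k hk ↦
      sq_mul_aperyTerm_mul_succ_modEq (mem_Ico.1 hk).1 (mem_Ico.1 hk).2
  · rw [h] at hn'
    rw [← hn']
    exact sum_sq_modEq_zero_of_sq_mul_modEq hp5 fun k hk ↦
      sq_mul_aperyTerm_mul_add_pred_modEq (mem_Ico.1 hk).1 (mem_Ico.1 hk).2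

theorem apery_modEq_apery_div (hp5 : 5 ≤ p) {n : ℕ} (hn : DigitsZeroOrPred p n) :
    apery n ≡ apery (n / p) [MOD p ^ 3] := by
  rcases eq_or_ne n 0 with rfl | hn0
  · simp [Nat.ModEq.refl]
  have hmul : ∑ q ∈ range (n / p + 1), aperyTerm n (p * q) ^ 2 ≡ apery (n / p) [MOD p ^ 3] := by
    rw [apery_eq_sum_aperyTerm_sq]
    refine Nat.ModEq.sum fun q hq ↦ ?_
    conv_lhs => rw [← Nat.div_add_mod n p]
    exact sq_aperyTerm_mul_add_mul_modEq (hn.div hp.out.one_lt) (Nat.mod_lt n hp.out.pos)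
      (Nat.lt_succ_iff.1 (mem_range.1 hq))
  have hsmall : ((range (n + 1)).filter (¬ p ∣ ·)).filter (· < p) = Ico 1 p := by
    have := hn.pred_le hp.out.one_lt hn0
    ext k
    simp only [mem_filter, mem_range, mem_Ico]
    constructor
    · rintro ⟨⟨-, hk⟩, hkp⟩
      exact ⟨Nat.pos_of_ne_zero (by rintro rfl; exact hk (dvd_zero p)), hkp⟩
    · rintro ⟨hk, hkp⟩
      exact ⟨⟨by omega, Nat.not_dvd_of_pos_of_lt hk hkp⟩, hkp⟩
  have hlarge : ∑ k ∈ ((range (n + 1)).filter (¬ p ∣ ·)).filter (¬ · < p), aperyTerm n k ^ 2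
      ≡ 0 [MOD p ^ 3] := Nat.ModEq.sum_zero fun k hk ↦ by
    simp only [mem_filter, mem_range, not_lt] at hk
    exact sq_aperyTerm_modEq_zero hn hk.1.2 hk.2 (Nat.lt_succ_iff.1 hk.1.1)
  have hnot := (sum_Ico_sq_aperyTerm_modEq_zero hp5 (hn.mod_eq hp.out.one_lt) hn0).add hlarge
  rw [← hsmall, sum_filter_add_sum_filter_not, add_zero] at hnot
  rw [apery_eq_sum_aperyTerm_sq, ← sum_filter_add_sum_filter_not _ (p ∣ ·),
    sum_range_succ_filter_dvd _ hp.out.pos]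
  simpa using hmul.add hnot

end Apery

theorem apery_digits_zero_pred_mod_p_cubed (p : ℕ) (hp : p.Prime) (hp5 : 5 ≤ p) (n : ℕ)
    (hdig : ∀ e ∈ Nat.digits p n, e = 0 ∨ e = p - 1) :
    apery n ≡ 1 [MOD p ^ 3] := by
  have := Fact.mk hp
  induction n using Nat.strong_induction_on with
  | _ n ih =>
  rcases eq_or_ne n 0 with rfl | hn0
  · rfl
  exact (Apery.apery_modEq_apery_div hp5 hdig).trans <|
    ih _ (Nat.div_lt_self (Nat.pos_of_ne_zero hn0) hp.one_lt) (DigitsZeroOrPred.div hp.one_lt hdig)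
end

section
/- For every prime p ≥ 5, A(p−1) ≡ 1 (mod p^3), where A denotes the Apéry numbers. -/
open Finset

lemma ZMod.sum_univ_eq_sum_range {M : Type*} [AddCommMonoid M] (n : ℕ) [NeZero n]
    (f : ZMod n → M) : ∑ x, f x = ∑ k ∈ range n, f k := by
  rw [← (ZMod.finEquiv n).toEquiv.sum_comp, ← Fin.sum_univ_eq_sum_range (fun k => f k)]
  refine sum_congr rfl fun i _ => congrArg f ?_
  cases n
  · exact absurd rfl (NeZero.ne 0)
  · exact (Fin.cast_val_eq_self i).symm

lemma FiniteField.sum_inv_pow_lt_card_sub_one {K : Type*} [Field K] [Fintype K] (i : ℕ)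
    (h : i < Fintype.card K - 1) : ∑ x : K, x⁻¹ ^ i = 0 := by
  rw [← FiniteField.sum_pow_lt_card_sub_one (K := K) i h]
  exact Fintype.sum_bijective _ inv_involutive.bijective _ _ fun _ => rfl

lemma ZMod.sum_range_inv_pow_eq_zero (p : ℕ) [Fact p.Prime] (i : ℕ) (hi : i < p - 1) :
    ∑ k ∈ range p, (k : ZMod p)⁻¹ ^ i = 0 := by
  rw [← ZMod.sum_univ_eq_sum_range p (fun x => x⁻¹ ^ i)]
  exact FiniteField.sum_inv_pow_lt_card_sub_one i (by rwa [ZMod.card])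

lemma Nat.choose_add_succ_mul (n j : ℕ) :
    (n + j).choose (j + 1) * (j + 1) = (n + j).choose j * n := by
  simpa using Nat.choose_succ_right_eq (n + j) j

namespace Nat.Prime

variable {p : ℕ}

lemma cast_choose_pred (hp : p.Prime) (k : ℕ) (hk : k < p) :
    ((p - 1).choose k : ZMod p) = (-1) ^ k := by
  induction k with
  | zero => simp
  | succ k ih =>
    have hpascal : p.choose (k + 1) = (p - 1).choose k + (p - 1).choose (k + 1) := by
      rw [← Nat.choose_succ_succ', Nat.sub_add_cancel hp.one_le]
    have hzero : (p.choose (k + 1) : ZMod p) = 0 :=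
      (ZMod.natCast_eq_zero_iff _ _).2 (hp.dvd_choose_self k.succ_ne_zero hk)
    rw [hpascal, Nat.cast_add, ih (by omega)] at hzero
    rw [pow_succ]
    linear_combination hzero

lemma cast_choose_add_self (hp : p.Prime) (j : ℕ) (hj : j < p) :
    ((p + j).choose j : ZMod p) = 1 := by
  have := Fact.mk hp
  have hlucas := Choose.choose_modEq_choose_mod_mul_choose_div_nat (n := p + j) (k := j) (p := p)
  rw [← ZMod.natCast_eq_natCast_iff] at hlucas
  simp [hlucas, Nat.add_mod_left, Nat.mod_eq_of_lt hj, Nat.add_div_left _ hp.pos,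
    Nat.div_eq_of_lt hj]

lemma dvd_choose_add_succ (hp : p.Prime) (j : ℕ) (hj : j + 1 < p) :
    p ∣ (p + j).choose (j + 1) :=
  (Nat.coprime_of_lt_prime j.succ_ne_zero hj hp).dvd_of_dvd_mul_right
    ⟨(p + j).choose j, by rw [Nat.choose_add_succ_mul, mul_comm]⟩

lemma cast_choose_add_succ_div_mul (hp : p.Prime) (j : ℕ) (hj : j + 1 < p) :
    (((p + j).choose (j + 1) / p : ℕ) : ZMod p) * (j + 1) = 1 := by
  have hdiv : (p + j).choose (j + 1) / p * (j + 1) = (p + j).choose j := by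
    apply Nat.eq_of_mul_eq_mul_left hp.pos
    rw [← mul_assoc, Nat.mul_div_cancel' (hp.dvd_choose_add_succ j hj), Nat.choose_add_succ_mul,
      mul_comm]
  exact_mod_cast
    (congrArg (Nat.cast : ℕ → ZMod p) hdiv).trans (hp.cast_choose_add_self j (by omega))

lemma dvd_sum_sq_choose_pred_mul_choose_add_succ_div (hp : p.Prime) (hp5 : 5 ≤ p) :
    p ∣ ∑ j ∈ range (p - 1), ((p - 1).choose (j + 1) * ((p + j).choose (j + 1) / p)) ^ 2 := by
  have := Fact.mk hp
  have hterm : ∀ j ∈ range (p - 1),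
      ((((p - 1).choose (j + 1) * ((p + j).choose (j + 1) / p)) ^ 2 : ℕ) : ZMod p) =
        ((j + 1 : ℕ) : ZMod p)⁻¹ ^ 2 := by
    intro j hj
    have hj : j + 1 < p := by rw [mem_range] at hj; omega
    push_cast
    rw [hp.cast_choose_pred _ hj, eq_inv_of_mul_eq_one_left (hp.cast_choose_add_succ_div_mul j hj),
      mul_pow, ← pow_mul, pow_mul', neg_one_sq, one_pow, one_mul]
  rw [← ZMod.natCast_eq_zero_iff, Nat.cast_sum, sum_congr rfl hterm]
  have hshift := sum_range_succ' (fun k => (k : ZMod p)⁻¹ ^ 2) (p - 1)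
  rw [Nat.sub_add_cancel hp.one_le, ZMod.sum_range_inv_pow_eq_zero p 2 (by omega)] at hshift
  simpa using hshift.symm

end Nat.Prime

lemma apery_pred_eq {p : ℕ} (hp : p.Prime) :
    apery (p - 1) = 1 + p ^ 2 *
      ∑ j ∈ range (p - 1), ((p - 1).choose (j + 1) * ((p + j).choose (j + 1) / p)) ^ 2 := by
  rw [apery, sum_range_succ', add_comm, mul_sum]
  congr 1
  · simp
  refine sum_congr rfl fun j hj => ?_
  have hj : j + 1 < p := by rw [mem_range] at hj; omega
  obtain ⟨d, hd⟩ := hp.dvd_choose_add_succ j hj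
  rw [show p - 1 + (j + 1) = p + j by omega, hd, Nat.mul_div_cancel_left d hp.pos]
  ring

theorem apery_pred_prime_mod_p_cubed (p : ℕ) (hp : p.Prime) (hp5 : 5 ≤ p) :
    apery (p - 1) ≡ 1 [MOD p ^ 3] := by
  obtain ⟨m, hm⟩ := hp.dvd_sum_sq_choose_pred_mul_choose_add_succ_div hp5
  rw [apery_pred_eq hp, hm, show p ^ 2 * (p * m) = p ^ 3 * m by ring]
  exact Nat.add_mul_mod_self_left 1 (p ^ 3) m
end
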